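/- For every q with ‖q‖_d ≤ 2β* and every y ∈ ℝ^d with ‖y‖_d = 1, one has ‖J(q)U(q)y‖_d ≥ γ/2. -/

import Mathlib

/-!
On the ball of radius `min(δ*, 1/(2κ))` we have `‖J(q)‖ ≤ ‖J(0)‖ + κ‖q‖ ≤ 3/2`, so `u` is
`3/2`-Lipschitz there. Hence each column `u(q) − u(q_ℓ)` of `U(q)` has norm at most `3/(2κ)`, and
`U(q)y − U(0)y = (∑ y_ℓ)(u(q) − u(0))` has norm at most `(3/2)√d‖q‖`, using `∑ |y_ℓ| ≤ √d‖y‖`.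
Splitting `J(q)U(q)y − J(0)U(0)y = (J(q) − J(0))U(q)y + J(0)(U(q)y − U(0)y)` gives a
perturbation of size at most `3√d‖q‖ ≤ 3γ/8`, which leaves `‖J(q)U(q)y‖ ≥ 5γ/8`.
-/

open Metric

/-- The continuous linear map `ℝ^D → ℝ^d` given by the `d × D` matrix `[I_d | 0_{d,D-d}]`. -/
noncomputable def projCLM (d D : ℕ) (h : d ≤ D) :
    EuclideanSpace ℝ (Fin D) →L[ℝ] EuclideanSpace ℝ (Fin d) :=
  LinearMap.toContinuousLinearMap
    { toFun := fun x => WithLp.toLp 2 (fun i => x (Fin.castLE h i))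
      map_add' := fun _ _ => rfl
      map_smul' := fun _ _ => rfl }

/-- The `D × d` matrix `U(q)` whose `j`-th column is `u(q) − x_j* = u(q) − u(q_j)`,
viewed as a continuous linear map `ℝ^d → ℝ^D`. -/
noncomputable def Umap {d D : ℕ}
    (u : EuclideanSpace ℝ (Fin d) → EuclideanSpace ℝ (Fin D))
    (qs : Fin d → EuclideanSpace ℝ (Fin d)) (q : EuclideanSpace ℝ (Fin d)) :
    EuclideanSpace ℝ (Fin d) →L[ℝ] EuclideanSpace ℝ (Fin D) :=
  LinearMap.toContinuousLinearMap
    { toFun := fun y => ∑ ℓ : Fin d, y ℓ • (u q - u (qs ℓ))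
      map_add' := by
        intro y z
        simp [PiLp.add_apply, add_smul, Finset.sum_add_distrib]
      map_smul' := by
        intro c y
        simp [PiLp.smul_apply, smul_smul, Finset.smul_sum] }

theorem EuclideanSpace.sum_abs_le_sqrt_card_mul_norm {ι : Type*} [Fintype ι]
    (y : EuclideanSpace ℝ ι) : ∑ i, |y i| ≤ √(Fintype.card ι) * ‖y‖ := by
  simpa [EuclideanSpace.norm_eq] using
    Real.sum_mul_le_sqrt_mul_sqrt Finset.univ (fun _ ↦ (1 : ℝ)) (fun i ↦ |y i|)

theorem EuclideanSpace.norm_sum_smul_le {ι E : Type*} [Fintype ι] [SeminormedAddCommGroup E]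
    [NormedSpace ℝ E] (y : EuclideanSpace ℝ ι) (v : ι → E) {C : ℝ} (hv : ∀ i, ‖v i‖ ≤ C)
    (hC : 0 ≤ C) :
    ‖∑ i, y i • v i‖ ≤ √(Fintype.card ι) * ‖y‖ * C := by
  calc ‖∑ i, y i • v i‖ ≤ ∑ i, |y i| * C := by
        refine (norm_sum_le _ _).trans (Finset.sum_le_sum fun i _ ↦ ?_)
        rw [norm_smul, Real.norm_eq_abs]
        exact mul_le_mul_of_nonneg_left (hv i) (abs_nonneg _)
    _ ≤ √(Fintype.card ι) * ‖y‖ * C := by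
        rw [← Finset.sum_mul]
        exact mul_le_mul_of_nonneg_right (sum_abs_le_sqrt_card_mul_norm y) hC

theorem norm_projCLM_le_one (d D : ℕ) (h : d ≤ D) : ‖projCLM d D h‖ ≤ 1 := by
  refine ContinuousLinearMap.opNorm_le_bound _ zero_le_one fun x ↦ ?_
  rw [one_mul, EuclideanSpace.norm_eq, EuclideanSpace.norm_eq]
  gcongr
  calc ∑ i : Fin d, ‖projCLM d D h x i‖ ^ 2
      = ∑ j ∈ Finset.univ.map (Fin.castLEEmb h), ‖x j‖ ^ 2 := by rw [Finset.sum_map]; rfl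
    _ ≤ ∑ j, ‖x j‖ ^ 2 :=
        Finset.sum_le_sum_of_subset_of_nonneg (Finset.subset_univ _) fun _ _ _ ↦ sq_nonneg _

theorem ContinuousLinearMap.norm_apply_sub_apply_le {E F : Type*} [SeminormedAddCommGroup E]
    [SeminormedAddCommGroup F] [NormedSpace ℝ E] [NormedSpace ℝ F] (A B : E →L[ℝ] F) (x x' : E) :
    ‖A x - B x'‖ ≤ ‖A - B‖ * ‖x‖ + ‖B‖ * ‖x - x'‖ := by
  calc ‖A x - B x'‖ = ‖(A - B) x + B (x - x')‖ := by simp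
    _ ≤ ‖A - B‖ * ‖x‖ + ‖B‖ * ‖x - x'‖ :=
        (norm_add_le _ _).trans (add_le_add ((A - B).le_opNorm x) (B.le_opNorm _))

theorem Umap_apply_sub_Umap_apply {d D : ℕ}
    (u : EuclideanSpace ℝ (Fin d) → EuclideanSpace ℝ (Fin D))
    (qs : Fin d → EuclideanSpace ℝ (Fin d)) (p q y : EuclideanSpace ℝ (Fin d)) :
    Umap u qs q y - Umap u qs p y = ∑ ℓ, y ℓ • (u q - u p) := by
  simp only [Umap, LinearMap.coe_toContinuousLinearMap', LinearMap.coe_mk, AddHom.coe_mk,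
    ← Finset.sum_sub_distrib, ← smul_sub, sub_sub_sub_cancel_right]

theorem norm_Umap_apply_le {d D : ℕ}
    (u : EuclideanSpace ℝ (Fin d) → EuclideanSpace ℝ (Fin D))
    (qs : Fin d → EuclideanSpace ℝ (Fin d)) (q y : EuclideanSpace ℝ (Fin d)) {C : ℝ}
    (hC : ∀ ℓ, ‖u q - u (qs ℓ)‖ ≤ C) (hC0 : 0 ≤ C) :
    ‖Umap u qs q y‖ ≤ √d * ‖y‖ * C := by
  have h := EuclideanSpace.norm_sum_smul_le y _ hC hC0
  rw [Fintype.card_fin] at h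
  exact h

theorem norm_image_sub_le_of_norm_jacobian_sub_le {E F : Type*} [NormedAddCommGroup E]
    [InnerProductSpace ℝ E] [CompleteSpace E] [NormedAddCommGroup F] [InnerProductSpace ℝ F]
    [CompleteSpace F] {u : E → F} {J : E → F →L[ℝ] E} {δ κ : ℝ} (hκ : 0 < κ)
    (hu : ∀ q ∈ closedBall (0 : E) δ,
      HasFDerivWithinAt u (ContinuousLinearMap.adjoint (J q)) (closedBall 0 δ) q)
    (hJ0 : ‖J 0‖ ≤ 1) (hJlip : ∀ q ∈ closedBall (0 : E) δ, ‖J q - J 0‖ ≤ κ * ‖q‖)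
    {p p' : E} (hp : p ∈ closedBall 0 (min δ (1 / (2 * κ))))
    (hp' : p' ∈ closedBall 0 (min δ (1 / (2 * κ)))) :
    ‖u p' - u p‖ ≤ 3 / 2 * ‖p' - p‖ := by
  have hsub : closedBall (0 : E) (min δ (1 / (2 * κ))) ⊆ closedBall 0 δ :=
    closedBall_subset_closedBall (min_le_left _ _)
  refine Convex.norm_image_sub_le_of_norm_hasFDerivWithin_le
    (fun x hx ↦ (hu x (hsub hx)).mono hsub) (fun x hx ↦ ?_) (convex_closedBall _ _) hp hp'
  have hxκ : κ * ‖x‖ ≤ 1 / 2 := by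
    have := (mem_closedBall_zero_iff.mp hx).trans (min_le_right _ _)
    rw [le_div_iff₀ (by positivity)] at this
    linarith
  calc ‖ContinuousLinearMap.adjoint (J x)‖ = ‖J 0 + (J x - J 0)‖ := by simp
    _ ≤ 3 / 2 := by linarith [norm_add_le (J 0) (J x - J 0), hJlip x (hsub hx)]

theorem norm_apply_Umap_sub_le {d D : ℕ} {u : EuclideanSpace ℝ (Fin d) → EuclideanSpace ℝ (Fin D)}
    {J : EuclideanSpace ℝ (Fin d) → (EuclideanSpace ℝ (Fin D) →L[ℝ] EuclideanSpace ℝ (Fin d))}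
    {qs : Fin d → EuclideanSpace ℝ (Fin d)} {δ κ : ℝ} (hκ : 0 < κ)
    (hu : ∀ q ∈ closedBall (0 : EuclideanSpace ℝ (Fin d)) δ,
      HasFDerivWithinAt u (ContinuousLinearMap.adjoint (J q)) (closedBall 0 δ) q)
    (hJ0 : ‖J 0‖ ≤ 1)
    (hJlip : ∀ q ∈ closedBall (0 : EuclideanSpace ℝ (Fin d)) δ, ‖J q - J 0‖ ≤ κ * ‖q‖)
    (hqs : ∀ ℓ, qs ℓ ∈ closedBall (0 : EuclideanSpace ℝ (Fin d)) (min δ (1 / (2 * κ))))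
    {q : EuclideanSpace ℝ (Fin d)} (hq : q ∈ closedBall 0 (min δ (1 / (2 * κ))))
    (y : EuclideanSpace ℝ (Fin d)) :
    ‖J q (Umap u qs q y) - J 0 (Umap u qs 0 y)‖ ≤ 3 * (√d * ‖y‖ * ‖q‖) := by
  have hqκ : ‖q‖ ≤ 1 / (2 * κ) := (mem_closedBall_zero_iff.mp hq).trans (min_le_right _ _)
  have hlip : ∀ p ∈ closedBall 0 (min δ (1 / (2 * κ))), ‖u q - u p‖ ≤ 3 / 2 * ‖q - p‖ :=
    fun p hp ↦ norm_image_sub_le_of_norm_jacobian_sub_le hκ hu hJ0 hJlip hp hq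
  have hUq : ‖Umap u qs q y‖ ≤ √d * ‖y‖ * (3 / (2 * κ)) := by
    refine norm_Umap_apply_le u qs q y (fun ℓ ↦ (hlip _ (hqs ℓ)).trans ?_) (by positivity)
    have hqsκ := (mem_closedBall_zero_iff.mp (hqs ℓ)).trans (min_le_right _ _)
    calc 3 / 2 * ‖q - qs ℓ‖ ≤ 3 / 2 * (1 / (2 * κ) + 1 / (2 * κ)) := by
          gcongr; exact (norm_sub_le _ _).trans (add_le_add hqκ hqsκ)
      _ = 3 / (2 * κ) := by field_simp; ring
  have hUsub : ‖Umap u qs q y - Umap u qs 0 y‖ ≤ √d * ‖y‖ * (3 / 2 * ‖q‖) := by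
    have h0 : (0 : EuclideanSpace ℝ (Fin d)) ∈ closedBall 0 (min δ (1 / (2 * κ))) :=
      mem_closedBall_self (norm_nonneg q |>.trans (mem_closedBall_zero_iff.mp hq))
    rw [Umap_apply_sub_Umap_apply]
    simpa only [Fintype.card_fin] using
      EuclideanSpace.norm_sum_smul_le y _ (fun _ ↦ by simpa using hlip 0 h0) (by positivity)
  refine ((J q).norm_apply_sub_apply_le (J 0) _ _).trans ?_
  calc ‖J q - J 0‖ * ‖Umap u qs q y‖ + ‖J 0‖ * ‖Umap u qs q y - Umap u qs 0 y‖
      ≤ κ * ‖q‖ * (√d * ‖y‖ * (3 / (2 * κ))) + 1 * (√d * ‖y‖ * (3 / 2 * ‖q‖)) := by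
        gcongr; exact hJlip q (closedBall_subset_closedBall (min_le_left _ _) hq)
    _ = 3 * (√d * ‖y‖ * ‖q‖) := by field_simp; ring

theorem statement4_general (d D : ℕ) (hdD : d ≤ D)
    (u : EuclideanSpace ℝ (Fin d) → EuclideanSpace ℝ (Fin D))
    (δ κ : ℝ) (hκ : 0 < κ)
    (J : EuclideanSpace ℝ (Fin d) → (EuclideanSpace ℝ (Fin D) →L[ℝ] EuclideanSpace ℝ (Fin d)))
    (hu : ∀ q ∈ closedBall (0 : EuclideanSpace ℝ (Fin d)) δ,
      HasFDerivWithinAt u (ContinuousLinearMap.adjoint (J q)) (closedBall 0 δ) q)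
    (hJ0 : J 0 = projCLM d D hdD)
    (hJlip : ∀ q ∈ closedBall (0 : EuclideanSpace ℝ (Fin d)) δ, ‖J q - J 0‖ ≤ κ * ‖q‖)
    (qs : Fin d → EuclideanSpace ℝ (Fin d))
    (hqs : ∀ ℓ, qs ℓ ∈ closedBall (0 : EuclideanSpace ℝ (Fin d)) (min δ (1 / (2 * κ))))
    (γ : ℝ)
    (hγ : ∀ y : EuclideanSpace ℝ (Fin d), ‖y‖ = 1 → γ ≤ ‖(J 0) ((Umap u qs 0) y)‖) :
    ∀ q : EuclideanSpace ℝ (Fin d),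
      ‖q‖ ≤ 2 * ((1 / 2) * min (1 / (2 * κ)) (min δ (γ / (8 * Real.sqrt d)))) →
      ∀ y : EuclideanSpace ℝ (Fin d), ‖y‖ = 1 →
        γ / 2 ≤ ‖(J q) ((Umap u qs q) y)‖ := by
  intro q hq y hy
  have hd : 0 < d := Nat.pos_of_ne_zero (by rintro rfl; simp [Subsingleton.elim y 0] at hy)
  obtain ⟨hqκ, hqδ, hqγ⟩ : ‖q‖ ≤ 1 / (2 * κ) ∧ ‖q‖ ≤ δ ∧ ‖q‖ ≤ γ / (8 * √d) := by
    have h : ‖q‖ ≤ min (1 / (2 * κ)) (min δ (γ / (8 * √d))) := by linarith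
    exact ⟨h.trans (min_le_left _ _), h.trans ((min_le_right _ _).trans (min_le_left _ _)),
      h.trans ((min_le_right _ _).trans (min_le_right _ _))⟩
  have hsdq : √d * ‖q‖ ≤ γ / 8 := by
    rw [le_div_iff₀ (by positivity)] at hqγ ⊢; linarith
  have hpert := norm_apply_Umap_sub_le hκ hu (hJ0 ▸ norm_projCLM_le_one d D hdD) hJlip hqs
    (mem_closedBall_zero_iff.mpr (le_min hqδ hqκ)) y
  rw [hy, mul_one] at hpert
  linarith [hγ y hy, norm_le_norm_add_norm_sub (J q (Umap u qs q y)) (J 0 (Umap u qs 0 y)),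
    mul_nonneg (Real.sqrt_nonneg d) (norm_nonneg q)]

/-- with `β* = (1/2)·min(1/(2κ), δ*, γ/(8√d))`, for every `q` with
`‖q‖_d ≤ 2β*` and every unit vector `y ∈ ℝ^d`, `‖J(q)U(q)y‖_d ≥ γ/2`. -/
theorem statement4 (d D : ℕ) (hd : 1 ≤ d) (hdD : d ≤ D)
    (u : EuclideanSpace ℝ (Fin d) → EuclideanSpace ℝ (Fin D))
    (δ κ : ℝ) (hδ : 0 < δ) (hκ : 0 < κ)
    (J : EuclideanSpace ℝ (Fin d) → (EuclideanSpace ℝ (Fin D) →L[ℝ] EuclideanSpace ℝ (Fin d)))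
    (hu : ∀ q ∈ closedBall (0 : EuclideanSpace ℝ (Fin d)) δ,
      HasFDerivWithinAt u (ContinuousLinearMap.adjoint (J q)) (closedBall 0 δ) q)
    (hJcont : ContinuousOn J (closedBall 0 δ))
    (hJ0 : J 0 = projCLM d D hdD)
    (hJlip : ∀ q ∈ closedBall (0 : EuclideanSpace ℝ (Fin d)) δ, ‖J q - J 0‖ ≤ κ * ‖q‖)
    (qs : Fin d → EuclideanSpace ℝ (Fin d))
    (hqs : ∀ ℓ, qs ℓ ∈ closedBall (0 : EuclideanSpace ℝ (Fin d)) (min δ (1 / (2 * κ))))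
    (γ : ℝ) (hγpos : 0 < γ)
    (hγ : ∀ y : EuclideanSpace ℝ (Fin d), ‖y‖ = 1 → γ ≤ ‖(J 0) ((Umap u qs 0) y)‖) :
    ∀ q : EuclideanSpace ℝ (Fin d),
      ‖q‖ ≤ 2 * ((1 / 2) * min (1 / (2 * κ)) (min δ (γ / (8 * Real.sqrt d)))) →
      ∀ y : EuclideanSpace ℝ (Fin d), ‖y‖ = 1 →
        γ / 2 ≤ ‖(J q) ((Umap u qs q) y)‖ :=
  statement4_general d D hdD u δ κ hκ J hu hJ0 hJlip qs hqs γ hγ
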